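/- Work on a probability space (Ω, ℱ, P) with sub-σ-algebras 𝒢 ⊆ 𝒢' ⊆ ℱ. Let ξ : Ω → ℝ^d be bounded and 𝒢-measurable, let ε : Ω → ℝ be bounded and 𝒢'-measurable with E[ε | 𝒢] = 0 almost surely, let λ : Ω → ℝ be 𝒢'-measurable with λ ≤ 1 − c almost surely for a constant c > 0, and let η : Ω → {0,1} satisfy E[η | 𝒢'] = 1 − λ almost surely. Then the inverse-probability weighted estimating function has mean zero: E[(η/(1 − λ)) · ξ · ε] = 0 in ℝ^d (coordinatewise). (This is the population validity of the IPW estimating equation E{(η_{t+1}/(1 − λ_{t+1})) M_t(β*)} = 0, the key step in the proof of Theorem 2.) -/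

import Mathlib

open MeasureTheory ProbabilityTheory Filter

/-- Population validity of the IPW estimating equation: with `𝒢 ⊆ 𝒢'`, a bounded
`𝒢`-measurable basis vector `ξ`, a bounded `𝒢'`-measurable Bellman residual `ε` with
`E[ε | 𝒢] = 0` a.s., a `𝒢'`-measurable dropout propensity `λ ≤ 1 − c` a.s. and dropout
indicator `η ∈ {0,1}` with `E[η | 𝒢'] = 1 − λ` a.s., the inverse-probability weighted
estimating function has mean zero coordinatewise: `E[(η/(1 − λ)) · ξ · ε] = 0`. -/
theorem ipw_estimating_equation_mean_zero
    {Ω : Type*} (𝒢 𝒢' : MeasurableSpace Ω) [mΩ : MeasurableSpace Ω] (P : Measure Ω) [IsProbabilityMeasure P]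
    (h𝒢 : 𝒢 ≤ 𝒢') (h𝒢' : 𝒢' ≤ mΩ)
    (d : ℕ) (ξ : Ω → Fin d → ℝ)
    (hξ_meas : Measurable[𝒢] ξ) (hξ_bdd : ∃ C, ∀ ω i, |ξ ω i| ≤ C)
    (ε : Ω → ℝ) (hε_meas : Measurable[𝒢'] ε) (hε_bdd : ∃ B, ∀ ω, |ε ω| ≤ B)
    (hε_cond : P[ε|𝒢] =ᵐ[P] 0)
    (lam : Ω → ℝ) (hlam_meas : Measurable[𝒢'] lam)
    (c : ℝ) (hc : 0 < c) (hlam_le : ∀ᵐ ω ∂P, lam ω ≤ 1 - c)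
    (η : Ω → ℝ) (hη_meas : Measurable η) (hη01 : ∀ ω, η ω = 0 ∨ η ω = 1)
    (hce : P[η|𝒢'] =ᵐ[P] fun ω => 1 - lam ω) :
    ∀ i, ∫ ω, (η ω / (1 - lam ω)) * ξ ω i * ε ω ∂P = 0 := by
  intro i
  obtain ⟨C, hC⟩ := hξ_bdd
  obtain ⟨B, hB⟩ := hε_bdd
  set C' := max C 0 with hC'
  set B' := max B 0 with hB'
  have hC'0 : 0 ≤ C' := le_max_right _ _
  have hB'0 : 0 ≤ B' := le_max_right _ _
  have hCb : ∀ ω, |ξ ω i| ≤ C' := fun ω => (hC ω i).trans (le_max_left _ _)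
  have hBb : ∀ ω, |ε ω| ≤ B' := fun ω => (hB ω).trans (le_max_left _ _)
  set xi : Ω → ℝ := fun ω => ξ ω i with hxi
  have hxi_meas : Measurable[𝒢] xi := (measurable_pi_apply i).comp hξ_meas
  have hxi_meas' : Measurable[𝒢'] xi := hxi_meas.mono h𝒢 le_rfl
  have h𝒢m : 𝒢 ≤ mΩ := h𝒢.trans h𝒢'
  -- the weight h = ξ ε / (1 - λ)
  set h : Ω → ℝ := fun ω => xi ω * ε ω / (1 - lam ω) with hh
  have hh_meas : Measurable[𝒢'] h :=
    (hxi_meas'.mul hε_meas).div (measurable_const.sub hlam_meas)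
  have hη_bd : ∀ ω, |η ω| ≤ 1 := by
    intro ω; rcases hη01 ω with h0 | h0 <;> simp [h0]
  have hη_meas0 : Measurable[mΩ] η := hη_meas
  have hη_int : Integrable η P :=
    Integrable.mono' (integrable_const 1) hη_meas0.aestronglyMeasurable
      (Eventually.of_forall hη_bd)
  have hden : ∀ᵐ ω ∂P, c ≤ 1 - lam ω := by
    filter_upwards [hlam_le] with ω hω; linarith
  have hnum : ∀ ω, |xi ω * ε ω| ≤ C' * B' := by
    intro ω; rw [abs_mul]
    exact mul_le_mul (hCb ω) (hBb ω) (abs_nonneg _) hC'0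
  have hh_bd : ∀ᵐ ω ∂P, |h ω| ≤ C' * B' / c := by
    filter_upwards [hden] with ω hω
    have hpos : 0 < 1 - lam ω := lt_of_lt_of_le hc hω
    rw [hh, abs_div, abs_of_pos hpos]
    exact div_le_div₀ (mul_nonneg hC'0 hB'0) (hnum ω) hc hω
  have hhη_int : Integrable (fun ω => h ω * η ω) P := by
    refine Integrable.mono' (integrable_const (C' * B' / c))
      (((hh_meas.mono h𝒢' le_rfl).mul hη_meas0).aestronglyMeasurable) ?_
    filter_upwards [hh_bd] with ω hω
    calc |h ω * η ω| = |h ω| * |η ω| := abs_mul _ _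
      _ ≤ (C' * B' / c) * 1 :=
          mul_le_mul hω (hη_bd ω) (abs_nonneg _) (by positivity)
      _ = C' * B' / c := mul_one _
  have hε_int : Integrable ε P :=
    Integrable.mono' (integrable_const B') ((hε_meas.mono h𝒢' le_rfl).aestronglyMeasurable)
      (Eventually.of_forall hBb)
  have hxie_int : Integrable (fun ω => xi ω * ε ω) P :=
    Integrable.mono' (integrable_const (C' * B'))
      (((hxi_meas'.mul hε_meas).mono h𝒢' le_rfl).aestronglyMeasurable)
      (Eventually.of_forall hnum)
  -- Step 0: rewrite the integrand
  have step0 : ∫ ω, (η ω / (1 - lam ω)) * ξ ω i * ε ω ∂P = ∫ ω, h ω * η ω ∂P :=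
    integral_congr_ae (Eventually.of_forall fun ω => by rw [hh, hxi]; ring)
  -- Step 1: condition on 𝒢' and pull out h
  have key1 : P[(fun ω => h ω * η ω)|𝒢'] =ᵐ[P] fun ω => h ω * ((P[η|𝒢']) ω) :=
    condExp_mul_of_stronglyMeasurable_left hh_meas.stronglyMeasurable hhη_int hη_int
  have key2 : (fun ω => h ω * ((P[η|𝒢']) ω)) =ᵐ[P] fun ω => xi ω * ε ω := by
    filter_upwards [hce, hden] with ω h1 h2
    have hne : (1 - lam ω) ≠ 0 := ne_of_gt (lt_of_lt_of_le hc h2)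
    rw [hh]
    simp only [h1]
    field_simp
  have step1 : ∫ ω, h ω * η ω ∂P = ∫ ω, xi ω * ε ω ∂P := by
    rw [← integral_condExp (f := fun ω => h ω * η ω) h𝒢']
    exact integral_congr_ae (key1.trans key2)
  -- Step 2: condition on 𝒢 and pull out xi
  have key3 : P[(fun ω => xi ω * ε ω)|𝒢] =ᵐ[P] fun ω => xi ω * ((P[ε|𝒢]) ω) :=
    condExp_mul_of_stronglyMeasurable_left hxi_meas.stronglyMeasurable hxie_int hε_int
  have key4 : (fun ω => xi ω * ((P[ε|𝒢]) ω)) =ᵐ[P] fun _ => (0 : ℝ) := by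
    filter_upwards [hε_cond] with ω h1
    simp [h1]
  have step2 : ∫ ω, xi ω * ε ω ∂P = 0 := by
    rw [← integral_condExp (f := fun ω => xi ω * ε ω) h𝒢m]
    rw [integral_congr_ae (key3.trans key4)]
    simp
  rw [step0, step1, step2]
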